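/- arXiv:2405.08075 — 3 statements merged into one kernel-verified Lean document; each statement's English description precedes it below -/
import Mathlib

section
/- Let G be a finite group, F a field, and Δ(G) the augmentation ideal of FG. For elements a, b ∈ 1 + Δ(G) with A = a + 1, B = b + 1, the element C = 1 + b⁻¹a⁻¹ba satisfies C ≡ (1 + A + B)[A, B] mod Δ(G)⁴, where [A,B] = AB + BA, provided char F = 2. -/
/-- The augmentation map FG → F of a group algebra. -/
noncomputable def augMap (F : Type*) [Field F] (G : Type*) [Group G] :
    MonoidAlgebra F G →ₐ[F] F :=
  MonoidAlgebra.lift F F G 1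

/-- The augmentation ideal Δ(G) of FG, as an F-subspace (it is a two-sided ideal, and
its powers are taken as products of F-subspaces). -/
noncomputable def augIdeal (F : Type*) [Field F] (G : Type*) [Group G] :
    Submodule F (MonoidAlgebra F G) :=
  LinearMap.ker (augMap F G).toLinearMap

/-! In characteristic 2, `1 + b⁻¹a⁻¹ba = b⁻¹a⁻¹(ab + ba)` and `ab + ba = AB + BA ∈ Δ²`, while
`b⁻¹a⁻¹ - (1 + A + B) = A'A + B'B + B'A'` with `A' = a⁻¹ + 1`, `B' = b⁻¹ + 1`, which also lies in
`Δ²`. Hence `C - (1 + A + B)[A, B] = (A'A + B'B + B'A')[A, B] ∈ Δ²Δ² = Δ⁴`. -/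

section CommutatorIdentity

variable {R : Type*} [Ring R]

theorem one_add_commutator_eq (a b : Rˣ) :
    1 + ((b⁻¹ * a⁻¹ * b * a : Rˣ) : R) = ((b⁻¹ * a⁻¹ : Rˣ) : R) * (a * b + b * a) := by
  rw [mul_add, ← mul_inv_rev, ← Units.val_mul a b, Units.inv_mul, ← Units.val_mul, ← Units.val_mul,
    mul_inv_rev, ← mul_assoc]

variable [CharP R 2]

theorem add_one_mul_add_one_add_comm (x y : R) :
    (x + 1) * (y + 1) + (y + 1) * (x + 1) = x * y + y * x := by
  have expand : (x + 1) * (y + 1) + (y + 1) * (x + 1) = x * y + y * x + 2 * (x + y + 1) := by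
    noncomm_ring
  rw [expand, CharTwo.two_eq_zero, zero_mul, add_zero]

theorem val_inv_mul_inv_sub_eq (a b : Rˣ) :
    ((b⁻¹ * a⁻¹ : Rˣ) : R) - (1 + ((a : R) + 1) + ((b : R) + 1)) =
      ((↑a⁻¹ : R) + 1) * ((a : R) + 1) + ((↑b⁻¹ : R) + 1) * ((b : R) + 1) +
        ((↑b⁻¹ : R) + 1) * ((↑a⁻¹ : R) + 1) := by
  have expand : ((↑a⁻¹ : R) + 1) * ((a : R) + 1) + ((↑b⁻¹ : R) + 1) * ((b : R) + 1) +
        ((↑b⁻¹ : R) + 1) * ((↑a⁻¹ : R) + 1) =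
      (↑a⁻¹ * a - 1) + (↑b⁻¹ * b - 1) + 2 * (↑a⁻¹ + ↑b⁻¹ + 1) +
        (↑b⁻¹ * ↑a⁻¹ + (1 + ((a : R) + 1) + ((b : R) + 1))) := by
    noncomm_ring
  rw [expand, Units.inv_mul, Units.inv_mul, sub_self, CharTwo.two_eq_zero, zero_mul, add_zero,
    add_zero, zero_add, CharTwo.sub_eq_add, Units.val_mul]

theorem one_add_commutator_sub_eq (a b : Rˣ) :
    1 + ((b⁻¹ * a⁻¹ * b * a : Rˣ) : R) -
        (1 + ((a : R) + 1) + ((b : R) + 1)) *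
          (((a : R) + 1) * ((b : R) + 1) + ((b : R) + 1) * ((a : R) + 1)) =
      (((↑a⁻¹ : R) + 1) * ((a : R) + 1) + ((↑b⁻¹ : R) + 1) * ((b : R) + 1) +
          ((↑b⁻¹ : R) + 1) * ((↑a⁻¹ : R) + 1)) *
        (((a : R) + 1) * ((b : R) + 1) + ((b : R) + 1) * ((a : R) + 1)) := by
  rw [one_add_commutator_eq, add_one_mul_add_one_add_comm, ← sub_mul, val_inv_mul_inv_sub_eq]

end CommutatorIdentity

section Augmentation

variable {F : Type*} [Field F] {G : Type*} [Group G]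

theorem augMap_eq_one_of_sub_one_mem {x : MonoidAlgebra F G} (hx : x - 1 ∈ augIdeal F G) :
    augMap F G x = 1 := by
  have hφ : augMap F G (x - 1) = 0 := hx
  rwa [map_sub, map_one, sub_eq_zero] at hφ

theorem augMap_val_inv {u : (MonoidAlgebra F G)ˣ} (hu : augMap F G u = 1) :
    augMap F G ↑u⁻¹ = 1 := by
  rw [map_units_inv, hu, inv_one]

theorem add_one_mem_augIdeal [CharP F 2] {x : MonoidAlgebra F G} (hx : augMap F G x = 1) :
    x + 1 ∈ augIdeal F G :=
  show augMap F G (x + 1) = 0 by rw [map_add, map_one, hx, CharTwo.add_self_eq_zero]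

theorem mul_mem_augIdeal_sq {x y : MonoidAlgebra F G} (hx : x ∈ augIdeal F G)
    (hy : y ∈ augIdeal F G) : x * y ∈ augIdeal F G ^ 2 :=
  pow_two (augIdeal F G) ▸ Submodule.mul_mem_mul hx hy

end Augmentation

theorem stmt17_general (F : Type*) [Field F] [CharP F 2] (G : Type*) [Group G]
    (a b : (MonoidAlgebra F G)ˣ)
    (ha : (a : MonoidAlgebra F G) - 1 ∈ augIdeal F G)
    (hb : (b : MonoidAlgebra F G) - 1 ∈ augIdeal F G) :
    (1 + ((b⁻¹ * a⁻¹ * b * a : (MonoidAlgebra F G)ˣ) : MonoidAlgebra F G)) -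
      (1 + ((a : MonoidAlgebra F G) + 1) + ((b : MonoidAlgebra F G) + 1)) *
        (((a : MonoidAlgebra F G) + 1) * ((b : MonoidAlgebra F G) + 1) +
          ((b : MonoidAlgebra F G) + 1) * ((a : MonoidAlgebra F G) + 1)) ∈
      augIdeal F G ^ 4 := by
  have : CharP (MonoidAlgebra F G) 2 :=
    charP_of_injective_algebraMap (algebraMap F (MonoidAlgebra F G)).injective 2
  have hφa := augMap_eq_one_of_sub_one_mem ha
  have hφb := augMap_eq_one_of_sub_one_mem hb
  have hA := add_one_mem_augIdeal hφa
  have hB := add_one_mem_augIdeal hφb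
  have hA' := add_one_mem_augIdeal (augMap_val_inv hφa)
  have hB' := add_one_mem_augIdeal (augMap_val_inv hφb)
  rw [one_add_commutator_sub_eq, show 4 = 2 + 2 from rfl, pow_add]
  exact Submodule.mul_mem_mul
    (add_mem (add_mem (mul_mem_augIdeal_sq hA' hA) (mul_mem_augIdeal_sq hB' hB))
      (mul_mem_augIdeal_sq hB' hA'))
    (add_mem (mul_mem_augIdeal_sq hA hB) (mul_mem_augIdeal_sq hB hA))

/-- Let G be a finite group and F a field of characteristic 2. For units
a, b of FG lying in 1 + Δ(G), setting A = a + 1, B = b + 1 and C = 1 + b⁻¹a⁻¹ba, one has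
C ≡ (1 + A + B)·[A,B] mod Δ(G)⁴, where [A,B] = AB + BA. -/
theorem stmt17 (F : Type*) [Field F] [CharP F 2] (G : Type*) [Group G] [Finite G]
    (a b : (MonoidAlgebra F G)ˣ)
    (ha : (a : MonoidAlgebra F G) - 1 ∈ augIdeal F G)
    (hb : (b : MonoidAlgebra F G) - 1 ∈ augIdeal F G) :
    (1 + ((b⁻¹ * a⁻¹ * b * a : (MonoidAlgebra F G)ˣ) : MonoidAlgebra F G)) -
      (1 + ((a : MonoidAlgebra F G) + 1) + ((b : MonoidAlgebra F G) + 1)) *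
        (((a : MonoidAlgebra F G) + 1) * ((b : MonoidAlgebra F G) + 1) +
          ((b : MonoidAlgebra F G) + 1) * ((a : MonoidAlgebra F G) + 1)) ∈
      augIdeal F G ^ 4 :=
  stmt17_general F G a b ha hb
end

section
/- Let G be a finite p-group with abelian derived subgroup of exponent p^ℓ and let F be a field of characteristic p. Then for every integer r ≥ ℓ, the subalgebra of Z(FG) generated by p^r-th powers equals F[℧_r(Z(G))], the group algebra of the subgroup of Z(G) generated by p^r-th powers of central elements. In particular, the relative augmentation ideal Δ(℧_r(Z(G)))·FG is invariant under all F-algebra automorphisms of FG. -/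
/-- The subgroup ℧_r(Z(G)) of G generated by p^r-th powers of central elements. -/
def agemoCenter (p : ℕ) (r : ℕ) (G : Type*) [Group G] : Subgroup G :=
  Subgroup.closure {g : G | ∃ h ∈ Subgroup.center G, g = h ^ p ^ r}

/-- The relative augmentation ideal Δ(℧_r(Z(G)))·FG, as an F-subspace of FG. -/
noncomputable def relAugIdeal (p r : ℕ) (F : Type*) [Field F] (G : Type*) [Group G] :
    Submodule F (MonoidAlgebra F G) :=
  Submodule.span F {w : MonoidAlgebra F G |
    ∃ g ∈ agemoCenter p r G, ∃ u : MonoidAlgebra F G, w = (MonoidAlgebra.of F G g - 1) * u}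

/-!
The centre of `FG` is commutative and spanned by the class sums, so `y ↦ y ^ p ^ r` is additive
on it and `℧_r(Z(FG))` is generated by the `p ^ r`-th powers of class sums. A central class sum is
a central group element `g`, giving `g ^ p ^ r ∈ ℧_r(Z(G))`. A non-central class sum `K` of `g`
factors as `g * T`, where `T` is a sum of `|K|` pairwise commuting elements of the abelian derived
subgroup, whose `p ^ r`-th powers are `1`; so `K ^ p ^ r = g ^ p ^ r * |K| = 0`, since `p ∣ |K|`.

Every automorphism `φ` preserves `℧_r(Z(FG)) = F[℧_r(Z(G))]`, and the augmentation is the only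
algebra map `FG → F`, as its values on `G` are `p`-power roots of unity in characteristic `p`.
Hence `φ (z - 1)` is an element of `F[℧_r(Z(G))]` of augmentation zero, and all of these lie in
`Δ(℧_r(Z(G)))·FG`.
-/

open MonoidAlgebra

lemma Finset.sum_pow_expChar_pow_of_commute {R ι : Type*} [Ring R] (p n : ℕ) [ExpChar R p]
    (s : Finset ι) (f : ι → R) (h : ∀ i ∈ s, ∀ j ∈ s, Commute (f i) (f j)) :
    (∑ i ∈ s, f i) ^ p ^ n = ∑ i ∈ s, f i ^ p ^ n := by
  classical
  induction s using Finset.induction_on with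
  | empty => simp [zero_pow (expChar_pow_pos R p n).ne']
  | insert a s ha ih =>
    have hs : ∀ i ∈ s, ∀ j ∈ s, Commute (f i) (f j) := fun i hi j hj =>
      h i (mem_insert_of_mem hi) j (mem_insert_of_mem hj)
    have ha_comm : Commute (f a) (∑ i ∈ s, f i) :=
      .sum_right _ _ _ fun i hi => h a (mem_insert_self a s) i (mem_insert_of_mem hi)
    rw [sum_insert ha, sum_insert ha, add_pow_expChar_pow_of_commute _ _ ha_comm, ih hs]

section GroupTheory

variable {G : Type*} [Group G]

open scoped commutatorElement in
lemma inv_mul_mem_commutator_of_isConj {g x : G} (h : IsConj g x) :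
    g⁻¹ * x ∈ commutator G := by
  obtain ⟨c, rfl⟩ := isConj_iff.mp h
  have hcomm : g⁻¹ * (c * g * c⁻¹) = ⁅g⁻¹, c⁆ := by rw [commutatorElement_def]; group
  rw [hcomm, commutator_def]
  exact Subgroup.commutator_mem_commutator (Subgroup.mem_top _) (Subgroup.mem_top _)

lemma ConjClasses.card_filter_mk_eq [Fintype G] [DecidableEq G] (C : ConjClasses G) :
    (Finset.univ.filter fun x => ConjClasses.mk x = C).card = Nat.card C.carrier := by
  rw [Nat.card_eq_fintype_card, ← Set.toFinset_card]
  congr 1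
  ext x
  simp [ConjClasses.mem_carrier_iff_mk_eq]

lemma mem_center_of_subsingleton_carrier {g : G}
    (h : Subsingleton (ConjClasses.mk g).carrier) : g ∈ Subgroup.center G := by
  have hg : ConjClasses.mk g ∈ (ConjClasses.noncenter G)ᶜ :=
    Set.not_nontrivial_iff.mpr (Set.subsingleton_coe _ |>.mp h)
  obtain ⟨z, hz, hzg⟩ := (ConjClasses.mk_bijOn G).surjOn hg
  rwa [← (ConjClasses.mk_eq_mk_iff_isConj.mp hzg).eq_of_left_mem_center hz]

lemma IsPGroup.prime_dvd_nat_card_carrier [Finite G] {p : ℕ} [Fact p.Prime] (hG : IsPGroup p G)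
    {g : G} (hg : g ∉ Subgroup.center G) : p ∣ Nat.card (ConjClasses.mk g).carrier := by
  obtain ⟨_ | n, hn⟩ := (hG.of_equiv ConjAct.toConjAct).card_orbit g
  · rw [ConjAct.orbit_eq_carrier_conjClasses, pow_zero, Nat.card_eq_one_iff_unique] at hn
    exact absurd (mem_center_of_subsingleton_carrier hn.1) hg
  · rw [← ConjAct.orbit_eq_carrier_conjClasses, hn]
    exact dvd_pow_self p n.succ_ne_zero

end GroupTheory

lemma AlgEquiv.apply_mem_adjoin_pow_center {R A : Type*} [CommSemiring R] [Semiring A]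
    [Algebra R A] (φ : A ≃ₐ[R] A) (n : ℕ) {a : A}
    (ha : a ∈ Algebra.adjoin R {w | ∃ y ∈ Subalgebra.center R A, w = y ^ n}) :
    φ a ∈ Algebra.adjoin R {w | ∃ y ∈ Subalgebra.center R A, w = y ^ n} := by
  have hmap : φ a ∈ (Algebra.adjoin R {w | ∃ y ∈ Subalgebra.center R A, w = y ^ n}).map
      (φ : A →ₐ[R] A) := Subalgebra.mem_map.mpr ⟨a, ha, rfl⟩
  rw [AlgHom.map_adjoin] at hmap
  refine Algebra.adjoin_mono ?_ hmap
  rintro _ ⟨_, ⟨y, hy, rfl⟩, rfl⟩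
  exact ⟨φ y, MulEquivClass.apply_mem_center φ hy, map_pow _ _ _⟩

namespace MonoidAlgebra

noncomputable abbrev augmentation (F G : Type*) [CommSemiring F] [Group G] :
    MonoidAlgebra F G →ₐ[F] F :=
  lift F F G 1

variable {G : Type*} [Group G]

instance charP (p : ℕ) {R : Type*} [CommRing R] [CharP R p] : CharP (MonoidAlgebra R G) p :=
  charP_of_injective_algebraMap (R := R) (fun a b h => by
    simpa using congrArg (fun x : MonoidAlgebra R G => x.coeff 1) h) p

lemma eq_augmentation_of_isPGroup {F : Type*} [CommRing F] [IsReduced F] {p : ℕ} [ExpChar F p]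
    (hpG : IsPGroup p G) (f : MonoidAlgebra F G →ₐ[F] F) : f = augmentation F G := by
  ext g
  obtain ⟨k, hk⟩ := hpG g
  have hpow : f (of F G g) ^ p ^ k = 1 ^ p ^ k := by
    rw [one_pow, ← map_pow f, ← map_pow (of F G), hk, map_one, map_one]
  simpa using iterateFrobenius_inj F p k hpow

variable {F : Type*} [CommSemiring F]

lemma mem_center_of_forall_commute_of {y : MonoidAlgebra F G} (h : ∀ g, Commute (of F G g) y) :
    y ∈ Subalgebra.center F (MonoidAlgebra F G) := by
  rw [Subalgebra.mem_center_iff]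
  intro b
  induction b using MonoidAlgebra.induction_on with
  | of g => exact h g
  | add a b ha hb => rw [add_mul, mul_add, ha, hb]
  | smul c a ha => rw [smul_mul_assoc, mul_smul_comm, ha]

lemma of_mem_center {g : G} (hg : g ∈ Subgroup.center G) :
    of F G g ∈ Subalgebra.center F (MonoidAlgebra F G) :=
  mem_center_of_forall_commute_of fun h => by
    simp only [Commute, SemiconjBy, ← map_mul, Subgroup.mem_center_iff.mp hg h]

lemma coeff_conj_of_mem_center {y : MonoidAlgebra F G}
    (hy : y ∈ Subalgebra.center F (MonoidAlgebra F G)) (h x : G) :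
    y.coeff (h * x * h⁻¹) = y.coeff x := by
  have hc := congrArg (fun z => z.coeff (h * x)) (Subalgebra.mem_center_iff.mp hy (of F G h))
  simp only [of_apply, coeff_single_mul_apply, coeff_mul_single_apply] at hc
  simpa [mul_assoc] using hc.symm

variable [Fintype G] [DecidableEq G]

variable (F) in
noncomputable def classSum (C : ConjClasses G) : MonoidAlgebra F G :=
  ∑ x with ConjClasses.mk x = C, of F G x

lemma classSum_mem_center (C : ConjClasses G) :
    classSum F C ∈ Subalgebra.center F (MonoidAlgebra F G) := by
  refine mem_center_of_forall_commute_of fun h => ?_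
  simp only [Commute, SemiconjBy, classSum, Finset.mul_sum, Finset.sum_mul, ← map_mul]
  refine Finset.sum_equiv (MulAut.conj h).toEquiv (fun x => ?_) (fun x _ => ?_)
  · simp [ConjClasses.mk_eq_mk_iff_isConj.mpr (isConj_iff.mpr ⟨h, rfl⟩).symm]
  · simp

lemma classSum_mk_of_mem_center {g : G} (hg : g ∈ Subgroup.center G) :
    classSum F (ConjClasses.mk g) = of F G g := by
  rw [classSum, Finset.sum_eq_single_of_mem g (by simp)]
  intro x hx hxg
  rw [Finset.mem_filter_univ, ConjClasses.mk_eq_mk_iff_isConj] at hx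
  exact absurd (hx.eq_of_right_mem_center (Subgroup.coe_center G ▸ hg)) hxg

lemma mem_span_classSum_of_mem_center {y : MonoidAlgebra F G}
    (hy : y ∈ Subalgebra.center F (MonoidAlgebra F G)) :
    y ∈ Submodule.span F (Set.range (classSum F (G := G))) := by
  have hsum :
      y = ∑ C : ConjClasses G, ∑ x with ConjClasses.mk x = C, y.coeff x • of F G x := by
    rw [Finset.sum_fiberwise]
    conv_lhs => rw [← sum_coeff_single y, Finsupp.sum_fintype _ _ (by simp)]
    simp [of_apply]
  rw [hsum]
  refine Submodule.sum_mem _ fun C _ => ?_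
  obtain ⟨g, rfl⟩ := ConjClasses.mk_surjective C
  have hclass : ∑ x with ConjClasses.mk x = ConjClasses.mk g, y.coeff x • of F G x =
      y.coeff g • classSum F (ConjClasses.mk g) := by
    rw [classSum, Finset.smul_sum]
    refine Finset.sum_congr rfl fun x hx => ?_
    rw [Finset.mem_filter_univ, ConjClasses.mk_eq_mk_iff_isConj] at hx
    obtain ⟨c, rfl⟩ := isConj_iff.mp hx.symm
    rw [coeff_conj_of_mem_center hy]
  rw [hclass]
  exact Submodule.smul_mem _ _ (Submodule.subset_span ⟨_, rfl⟩)

lemma classSum_mk_pow_eq_zero {F : Type*} [CommRing F] {p r : ℕ} [Fact p.Prime] [CharP F p]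
    (hpG : IsPGroup p G) (hab : ∀ u v : commutator G, u * v = v * u)
    (hexp : Monoid.exponent (commutator G) ∣ p ^ r) {g : G} (hg : g ∉ Subgroup.center G) :
    classSum F (ConjClasses.mk g) ^ p ^ r = 0 := by
  set s := Finset.univ.filter fun x => ConjClasses.mk x = ConjClasses.mk g
  have hs : ∀ x ∈ s, g⁻¹ * x ∈ commutator G := fun x hx => by
    rw [Finset.mem_filter_univ, ConjClasses.mk_eq_mk_iff_isConj] at hx
    exact inv_mul_mem_commutator_of_isConj hx.symm
  set T := ∑ x ∈ s, of F G (g⁻¹ * x)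
  have hT : T = of F G g⁻¹ * classSum F (ConjClasses.mk g) := by
    simp [T, classSum, Finset.mul_sum, s]
  have hgT : Commute (of F G g) T := by
    rw [hT]
    refine .mul_right (by simp [Commute, SemiconjBy]) ?_
    exact Subalgebra.mem_center_iff.mp (classSum_mem_center _) (of F G g)
  have hs_pow : ∀ x ∈ s, (g⁻¹ * x) ^ p ^ r = 1 := fun x hx => by
    simpa using congrArg Subtype.val
      (Monoid.exponent_dvd_iff_forall_pow_eq_one.mp hexp ⟨_, hs x hx⟩)
  have hTpow : T ^ p ^ r = (Nat.card (ConjClasses.mk g).carrier : MonoidAlgebra F G) := by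
    rw [Finset.sum_pow_expChar_pow_of_commute]
    · rw [← ConjClasses.card_filter_mk_eq, Finset.card_eq_sum_ones, Nat.cast_sum, Nat.cast_one]
      exact Finset.sum_congr rfl fun x hx => by rw [← map_pow, hs_pow x hx, map_one]
    · intro x hx y hy
      simp only [Commute, SemiconjBy, ← map_mul]
      exact congrArg _ (congrArg Subtype.val (hab ⟨_, hs x hx⟩ ⟨_, hs y hy⟩))
  obtain ⟨t, ht⟩ := hpG.prime_dvd_nat_card_carrier hg
  calc classSum F (ConjClasses.mk g) ^ p ^ r = (of F G g * T) ^ p ^ r := by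
        rw [hT, ← mul_assoc, ← map_mul, mul_inv_cancel, map_one, one_mul]
    _ = 0 := by
        rw [hgT.mul_pow, hTpow, ht, Nat.cast_mul, CharP.cast_eq_zero, zero_mul, mul_zero]

end MonoidAlgebra

section AgemoCenter

variable {G : Type*} [Group G] {p r : ℕ}

lemma classSum_pow_mem_adjoin_agemoCenter {F : Type*} [CommRing F] [Fact p.Prime] [CharP F p]
    [Fintype G] [DecidableEq G] (hpG : IsPGroup p G) (hab : ∀ u v : commutator G, u * v = v * u)
    (hexp : Monoid.exponent (commutator G) ∣ p ^ r) (C : ConjClasses G) :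
    classSum F C ^ p ^ r ∈ Algebra.adjoin F (of F G '' (agemoCenter p r G : Set G)) := by
  obtain ⟨g, rfl⟩ := ConjClasses.mk_surjective C
  by_cases hg : g ∈ Subgroup.center G
  · rw [classSum_mk_of_mem_center hg, ← map_pow]
    exact Algebra.subset_adjoin ⟨_, Subgroup.subset_closure ⟨g, hg, rfl⟩, rfl⟩
  · rw [classSum_mk_pow_eq_zero hpG hab hexp hg]
    exact zero_mem _

lemma pow_mem_adjoin_agemoCenter_of_mem_center {F : Type*} [CommRing F] [Fact p.Prime]
    [CharP F p] [Finite G] (hpG : IsPGroup p G) (hab : ∀ u v : commutator G, u * v = v * u)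
    (hexp : Monoid.exponent (commutator G) ∣ p ^ r) {y : MonoidAlgebra F G}
    (hy : y ∈ Subalgebra.center F (MonoidAlgebra F G)) :
    y ^ p ^ r ∈ Algebra.adjoin F (of F G '' (agemoCenter p r G : Set G)) := by
  classical
  cases nonempty_fintype G
  have hcenter : Submodule.span F (Set.range (classSum F (G := G))) ≤
      Subalgebra.toSubmodule (Subalgebra.center F (MonoidAlgebra F G)) :=
    Submodule.span_le.mpr (Set.range_subset_iff.mpr classSum_mem_center)
  have hspan := mem_span_classSum_of_mem_center hy
  clear hy
  induction hspan using Submodule.span_induction with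
  | mem _ hC =>
    obtain ⟨C, rfl⟩ := hC
    exact classSum_pow_mem_adjoin_agemoCenter hpG hab hexp C
  | zero => simp [zero_pow (expChar_pow_pos F p r).ne']
  | add x z _ hz ihx ihz =>
    have hxz : Commute x z := (Subalgebra.mem_center_iff (R := F)).mp (hcenter hz) x
    rw [add_pow_expChar_pow_of_commute _ _ hxz]
    exact add_mem ihx ihz
  | smul a x _ ih =>
    rw [smul_pow]
    exact Subalgebra.smul_mem _ ih _

lemma of_mem_adjoin_pow_center_of_mem_agemoCenter {F : Type*} [CommSemiring F] {g : G}
    (hg : g ∈ agemoCenter p r G) :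
    of F G g ∈ Algebra.adjoin F {w : MonoidAlgebra F G |
      ∃ y ∈ Subalgebra.center F (MonoidAlgebra F G), w = y ^ p ^ r} := by
  induction hg using Subgroup.closure_induction'' with
  | mem _ hx =>
    obtain ⟨h, hh, rfl⟩ := hx
    exact Algebra.subset_adjoin ⟨of F G h, of_mem_center hh, map_pow _ _ _⟩
  | inv_mem _ hx =>
    obtain ⟨h, hh, rfl⟩ := hx
    rw [← inv_pow]
    exact Algebra.subset_adjoin ⟨of F G h⁻¹, of_mem_center (inv_mem hh), map_pow _ _ _⟩
  | one => exact map_one (of F G) ▸ one_mem _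
  | mul x y _ _ hx hy => exact (map_mul (of F G) x y).symm ▸ mul_mem hx hy

theorem adjoin_pow_center_eq_adjoin_agemoCenter {F : Type*} [CommRing F] [Fact p.Prime]
    [CharP F p] [Finite G] (hpG : IsPGroup p G) (hab : ∀ u v : commutator G, u * v = v * u)
    (hexp : Monoid.exponent (commutator G) ∣ p ^ r) :
    Algebra.adjoin F {w : MonoidAlgebra F G |
        ∃ y ∈ Subalgebra.center F (MonoidAlgebra F G), w = y ^ p ^ r} =
      Algebra.adjoin F (of F G '' (agemoCenter p r G : Set G)) := by
  refine le_antisymm (Algebra.adjoin_le ?_) (Algebra.adjoin_le ?_)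
  · rintro _ ⟨y, hy, rfl⟩
    exact pow_mem_adjoin_agemoCenter_of_mem_center hpG hab hexp hy
  · rintro _ ⟨g, hg, rfl⟩
    exact of_mem_adjoin_pow_center_of_mem_agemoCenter hg

section RelAugIdeal

variable {F : Type*} [Field F]

lemma mul_mem_relAugIdeal {x : MonoidAlgebra F G} (hx : x ∈ relAugIdeal p r F G)
    (a : MonoidAlgebra F G) : x * a ∈ relAugIdeal p r F G := by
  induction hx using Submodule.span_induction with
  | mem _ hw =>
    obtain ⟨g, hg, u, rfl⟩ := hw
    rw [mul_assoc]
    exact Submodule.subset_span ⟨g, hg, u * a, rfl⟩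
  | zero => simp
  | add x y _ _ hx hy => simpa [add_mul] using add_mem hx hy
  | smul c x _ hx => simpa [smul_mul_assoc] using Submodule.smul_mem _ c hx

lemma sub_algebraMap_augmentation_mem_relAugIdeal {a : MonoidAlgebra F G}
    (ha : a ∈ Algebra.adjoin F (of F G '' (agemoCenter p r G : Set G))) :
    a - algebraMap F _ (augmentation F G a) ∈ relAugIdeal p r F G := by
  induction ha using Algebra.adjoin_induction with
  | mem _ hx =>
    obtain ⟨g, hg, rfl⟩ := hx
    have : of F G g - 1 ∈ relAugIdeal p r F G :=
      Submodule.subset_span ⟨g, hg, 1, (mul_one _).symm⟩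
    rwa [lift_of, MonoidHom.one_apply, map_one]
  | algebraMap c => simp
  | add x y _ _ hx hy =>
    convert add_mem hx hy using 1
    simp only [map_add]; abel
  | mul x y _ _ hx hy =>
    convert add_mem (mul_mem_relAugIdeal hx y) (Submodule.smul_mem _ (augmentation F G x) hy)
      using 1
    rw [map_mul, map_mul, Algebra.smul_def, sub_mul, mul_sub]
    abel

lemma map_relAugIdeal_le [ExpChar F p] (hpG : IsPGroup p G)
    (φ : MonoidAlgebra F G ≃ₐ[F] MonoidAlgebra F G)
    (hφ : ∀ a ∈ Algebra.adjoin F (of F G '' (agemoCenter p r G : Set G)),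
      φ a ∈ Algebra.adjoin F (of F G '' (agemoCenter p r G : Set G))) :
    (relAugIdeal p r F G).map φ.toLinearMap ≤ relAugIdeal p r F G := by
  rw [Submodule.map_le_iff_le_comap]
  refine Submodule.span_le.mpr ?_
  rintro _ ⟨g, hg, u, rfl⟩
  have hε : augmentation F G (φ (of F G g)) = 1 := by
    simpa using DFunLike.congr_fun
      (eq_augmentation_of_isPGroup hpG ((augmentation F G).comp φ.toAlgHom)) (of F G g)
  have hsub := sub_algebraMap_augmentation_mem_relAugIdeal
    (hφ _ (Algebra.subset_adjoin ⟨g, hg, rfl⟩))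
  rw [hε, map_one] at hsub
  simpa using mul_mem_relAugIdeal hsub (φ u)

theorem map_relAugIdeal_eq [Fact p.Prime] [CharP F p] [Finite G] (hpG : IsPGroup p G)
    (hab : ∀ u v : commutator G, u * v = v * u) (hexp : Monoid.exponent (commutator G) ∣ p ^ r)
    (φ : MonoidAlgebra F G ≃ₐ[F] MonoidAlgebra F G) :
    (relAugIdeal p r F G).map φ.toLinearMap = relAugIdeal p r F G := by
  have hadjoin := adjoin_pow_center_eq_adjoin_agemoCenter (F := F) hpG hab hexp
  have hle (ψ : MonoidAlgebra F G ≃ₐ[F] MonoidAlgebra F G) :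
      (relAugIdeal p r F G).map ψ.toLinearMap ≤ relAugIdeal p r F G :=
    map_relAugIdeal_le hpG ψ fun a ha =>
      hadjoin ▸ ψ.apply_mem_adjoin_pow_center _ (hadjoin ▸ ha)
  refine le_antisymm (hle φ) ?_
  calc relAugIdeal p r F G
      = ((relAugIdeal p r F G).map φ.symm.toLinearMap).map φ.toLinearMap := by
        simp [← Submodule.map_comp]
    _ ≤ (relAugIdeal p r F G).map φ.toLinearMap := Submodule.map_mono (hle φ.symm)

end RelAugIdeal

end AgemoCenter

/-- Let G be a finite p-group with abelian derived subgroup of exponent p^ℓ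
and F a field of characteristic p. For every r ≥ ℓ, the subalgebra of FG generated by the
p^r-th powers of central elements of FG equals the group algebra F[℧_r(Z(G))] (the
subalgebra generated by the image of ℧_r(Z(G))); in particular the relative augmentation
ideal Δ(℧_r(Z(G)))·FG is invariant under every F-algebra automorphism of FG. -/
theorem stmt18 (p : ℕ) (hp : p.Prime) {G : Type*} [Group G] [Finite G]
    (hpG : IsPGroup p G)
    (hab : ∀ u v : commutator G, u * v = v * u)
    (ℓ : ℕ) (hexp : Monoid.exponent (commutator G) = p ^ ℓ)
    (F : Type*) [Field F] [CharP F p] (r : ℕ) (hr : ℓ ≤ r) :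
    Algebra.adjoin F {w : MonoidAlgebra F G |
        ∃ y ∈ Subalgebra.center F (MonoidAlgebra F G), w = y ^ p ^ r} =
      Algebra.adjoin F (MonoidAlgebra.of F G '' (agemoCenter p r G : Set G)) ∧
    ∀ φ : MonoidAlgebra F G ≃ₐ[F] MonoidAlgebra F G,
      Submodule.map φ.toLinearMap (relAugIdeal p r F G) = relAugIdeal p r F G := by
  have : Fact p.Prime := ⟨hp⟩
  have hexp' : Monoid.exponent (commutator G) ∣ p ^ r := hexp ▸ pow_dvd_pow p hr
  exact ⟨adjoin_pow_center_eq_adjoin_agemoCenter hpG hab hexp',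
    map_relAugIdeal_eq hpG hab hexp'⟩
end

section
/- Let G = ⟨x, y, z⟩ be one of the groups with relations z^{2^ℓ} = 1, [y,x] = z, [z,x] = z^{-2}, [z,y] = z^{-2} (and any of the admissible power relations on x, y), with ℓ ≥ 2, and F a field of characteristic 2. Set Z = z + 1 ∈ FG and Γ = Z·FG, which equals the relative augmentation ideal Δ([G,G])FG. Then for every g ∈ G and i ≥ 0, the Lie commutator [g, Z^{2^i}] = gZ^{2^i} + Z^{2^i}g lies in Γ^{2^{i+1}}. -/
open FreeGroup in
/-- Relators of G_θ = ⟨x,y,z | x^{2^n} = z^{r·2^{ℓ-1}}, y^{2^m} = x^{s·2^m}·z^{t·2^{ℓ-1}},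
z^{2^ℓ} = 1, [y,x] = z, [z,x] = z⁻², [z,y] = z⁻²⟩ (convention [y,x] = y⁻¹x⁻¹yx;
generators 0 ↦ x, 1 ↦ y, 2 ↦ z); these are the admissible power relations on x, y. -/
def relsGθ (n m ℓ r s t : ℕ) : Set (FreeGroup (Fin 3)) :=
  { (of 0) ^ (2 ^ n) * ((of 2) ^ (r * 2 ^ (ℓ - 1)))⁻¹,
    (of 1) ^ (2 ^ m) * ((of 0) ^ (s * 2 ^ m) * (of 2) ^ (t * 2 ^ (ℓ - 1)))⁻¹,
    (of 2) ^ (2 ^ ℓ),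
    (of 1)⁻¹ * (of 0)⁻¹ * of 1 * of 0 * (of 2)⁻¹,
    (of 2)⁻¹ * (of 0)⁻¹ * of 2 * of 0 * (of 2) ^ 2,
    (of 2)⁻¹ * (of 1)⁻¹ * of 2 * of 1 * (of 2) ^ 2 }

abbrev Gθ (n m ℓ r s t : ℕ) := PresentedGroup (relsGθ n m ℓ r s t)

/-- The element Z = z + 1 of the group algebra F·G_θ. -/
noncomputable def Zel (n m ℓ r s t : ℕ) (F : Type*) [Field F] :
    MonoidAlgebra F (Gθ n m ℓ r s t) :=
  MonoidAlgebra.of F (Gθ n m ℓ r s t) (PresentedGroup.of 2) + 1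

/-- Γ = Z·FG, the relative augmentation ideal Δ([G,G])·FG, as an F-subspace. -/
noncomputable def Gamma (n m ℓ r s t : ℕ) (F : Type*) [Field F] :
    Submodule F (MonoidAlgebra F (Gθ n m ℓ r s t)) :=
  Submodule.span F {w : MonoidAlgebra F (Gθ n m ℓ r s t) |
    ∃ u : MonoidAlgebra F (Gθ n m ℓ r s t), w = Zel n m ℓ r s t F * u}

/-!
Every generator of `G` conjugates `z` to `z` or `z⁻¹` (for `x` and `y` this is `[z,x] = [z,y] = z⁻²`),
so every `g ∈ G` conjugates `c = z^{2^i}` to `c` or `c⁻¹`; and `Z^{2^i} = c + 1` in characteristic 2.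
If `g` commutes with `c` the commutator vanishes. Otherwise `gc = c⁻¹g`, and
`[g, Z^{2^i}] = (c + c⁻¹)g = (c² + 1)c⁻¹g = Z^{2^{i+1}}c⁻¹g ∈ Γ^{2^{i+1}}`.
-/

theorem conj_eq_self_or_eq_inv_of_mem_closure {G : Type*} [Group G] {s : Set G} {z : G}
    (hs : ∀ a ∈ s, MulAut.conj a z = z ∨ MulAut.conj a z = z⁻¹) {g : G}
    (hg : g ∈ Subgroup.closure s) : MulAut.conj g z = z ∨ MulAut.conj g z = z⁻¹ := by
  induction hg using Subgroup.closure_induction with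
  | mem a ha => exact hs a ha
  | one => simp
  | mul a b _ _ ha hb =>
    rw [map_mul, MulAut.mul_apply]
    rcases hb with hb | hb <;> rw [hb]
    · exact ha
    · rw [map_inv, inv_inj, inv_eq_iff_eq_inv]
      exact ha.symm
  | inv a _ ha =>
    rw [map_inv, MulAut.inv_apply, MulEquiv.symm_apply_eq, MulEquiv.symm_apply_eq, map_inv]
    rcases ha with ha | ha
    · exact Or.inl ha.symm
    · exact Or.inr (by rw [ha, inv_inv])

theorem conj_eq_inv_of_mul_sq_eq_one {G : Type*} [Group G] {a z : G}
    (h : z⁻¹ * a⁻¹ * z * a * z ^ 2 = 1) : MulAut.conj a z = z⁻¹ := by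
  have h' : a⁻¹ * z * a = z⁻¹ := by
    calc a⁻¹ * z * a = z * (z⁻¹ * a⁻¹ * z * a * z ^ 2) * z⁻¹ ^ 2 := by group
      _ = z⁻¹ := by rw [h]; group
  calc a * z * a⁻¹ = (a * (a⁻¹ * z * a) * a⁻¹)⁻¹ := by rw [h']; group
    _ = z⁻¹ := by group

theorem CharTwo.mul_add_one_add_add_one_mul {A : Type*} [Ring A] [CharP A 2] {x c d : A}
    (hcd : c * d = 1) (hx : x * c = d * x) :
    x * (c + 1) + (c + 1) * x = (c + 1) ^ 2 * (d * x) := by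
  have hsq : (c + 1) ^ 2 = c * c + 1 := by
    rw [← add_zero (c * c + 1), ← CharTwo.add_self_eq_zero c]
    noncomm_ring
  calc x * (c + 1) + (c + 1) * x = d * x + x + (c * x + x) := by
        rw [mul_add, add_mul, hx, mul_one, one_mul]
    _ = c * x + d * x + (x + x) := by abel
    _ = (c + 1) ^ 2 * (d * x) := by
      rw [CharTwo.add_self_eq_zero, add_zero, hsq, add_mul, one_mul, mul_assoc, ← mul_assoc c d,
        hcd, one_mul]

theorem Submodule.pow_mul_mem_pow_of_forall_mul_mem {R A : Type*} [CommSemiring R] [Semiring A]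
    [Algebra R A] {p : Submodule R A} {a : A} (ha : ∀ u, a * u ∈ p) {k : ℕ} (hk : k ≠ 0)
    (u : A) : a ^ k * u ∈ p ^ k := by
  obtain ⟨k, rfl⟩ := Nat.exists_eq_succ_of_ne_zero hk
  rw [pow_succ a, mul_assoc, pow_succ p]
  exact mul_mem_mul (pow_mem_pow _ (by simpa using ha 1) k) (ha u)

namespace Gθ

variable {n m ℓ r s t : ℕ}

theorem conj_of_two_eq_self_or_eq_inv (g : Gθ n m ℓ r s t) :
    MulAut.conj g (PresentedGroup.of 2) = PresentedGroup.of 2 ∨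
      MulAut.conj g (PresentedGroup.of 2) = (PresentedGroup.of 2)⁻¹ := by
  refine conj_eq_self_or_eq_inv_of_mem_closure ?_ (g := g)
    (by rw [PresentedGroup.closure_range_of]; trivial)
  rintro _ ⟨j, rfl⟩
  fin_cases j
  · exact Or.inr (conj_eq_inv_of_mul_sq_eq_one (PresentedGroup.one_of_mem (by simp [relsGθ])))
  · exact Or.inr (conj_eq_inv_of_mul_sq_eq_one (PresentedGroup.one_of_mem (by simp [relsGθ])))
  · exact Or.inl (by simp)

end Gθ

theorem Zel_mul_mem_Gamma (n m ℓ r s t : ℕ) (F : Type*) [Field F]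
    (u : MonoidAlgebra F (Gθ n m ℓ r s t)) : Zel n m ℓ r s t F * u ∈ Gamma n m ℓ r s t F :=
  Submodule.subset_span ⟨u, rfl⟩

theorem Zel_pow_two_pow (n m ℓ r s t : ℕ) (F : Type*) [Field F] [CharP F 2] (i : ℕ) :
    Zel n m ℓ r s t F ^ 2 ^ i = MonoidAlgebra.of F _ (PresentedGroup.of 2 ^ 2 ^ i) + 1 := by
  have := charP_of_injective_algebraMap' F (A := MonoidAlgebra F (Gθ n m ℓ r s t)) 2
  rw [Zel, add_pow_char_pow_of_commute _ _ (Commute.one_right _), one_pow, map_pow]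

theorem stmt19_general (n m ℓ r s t : ℕ)
    (F : Type*) [Field F] [CharP F 2] :
    ∀ (g : Gθ n m ℓ r s t) (i : ℕ),
      MonoidAlgebra.of F (Gθ n m ℓ r s t) g * (Zel n m ℓ r s t F) ^ (2 ^ i) +
        (Zel n m ℓ r s t F) ^ (2 ^ i) * MonoidAlgebra.of F (Gθ n m ℓ r s t) g ∈
      Gamma n m ℓ r s t F ^ (2 ^ (i + 1)) := by
  intro g i
  have := charP_of_injective_algebraMap' F (A := MonoidAlgebra F (Gθ n m ℓ r s t)) 2
  rw [Zel_pow_two_pow]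
  set ι := MonoidAlgebra.of F (Gθ n m ℓ r s t)
  set c : Gθ n m ℓ r s t := PresentedGroup.of 2 ^ 2 ^ i
  have hconj : MulAut.conj g c = c ∨ MulAut.conj g c = c⁻¹ := by
    rcases Gθ.conj_of_two_eq_self_or_eq_inv g with h | h <;> simp [c, map_pow, h, inv_pow]
  rcases hconj with h | h
  · have hgc : Commute g c := by
      rwa [MulAut.conj_apply, mul_inv_eq_iff_eq_mul] at h
    rw [((hgc.map ι).add_right (Commute.one_right _)).eq, CharTwo.add_self_eq_zero]
    exact zero_mem _
  · have hgc : ι g * ι c = ι c⁻¹ * ι g := by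
      rw [← map_mul, ← map_mul, ← h, MulAut.conj_apply, inv_mul_cancel_right]
    rw [CharTwo.mul_add_one_add_add_one_mul (by rw [← map_mul, mul_inv_cancel, map_one]) hgc,
      ← Zel_pow_two_pow, ← pow_mul, ← pow_succ]
    exact Submodule.pow_mul_mem_pow_of_forall_mul_mem (Zel_mul_mem_Gamma n m ℓ r s t F)
      (by positivity) _

/-- For ℓ ≥ 2 and any admissible parameters, and F of characteristic 2,
for every g ∈ G_θ and i ≥ 0, the Lie commutator [g, Z^{2^i}] = g·Z^{2^i} + Z^{2^i}·g
lies in Γ^{2^{i+1}}. -/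
theorem stmt19 (n m ℓ r s t : ℕ) (hm : 1 ≤ m) (hnm : m ≤ n) (hℓ : 2 ≤ ℓ)
    (hr : r ≤ 1) (hs : s ≤ 2 ^ (n - m) - 1) (ht : t ≤ 1)
    (F : Type*) [Field F] [CharP F 2] :
    ∀ (g : Gθ n m ℓ r s t) (i : ℕ),
      MonoidAlgebra.of F (Gθ n m ℓ r s t) g * (Zel n m ℓ r s t F) ^ (2 ^ i) +
        (Zel n m ℓ r s t F) ^ (2 ^ i) * MonoidAlgebra.of F (Gθ n m ℓ r s t) g ∈
      Gamma n m ℓ r s t F ^ (2 ^ (i + 1)) :=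
  stmt19_general n m ℓ r s t F
end
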